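/- arXiv:2101.07333 — 4 statements merged into one kernel-verified Lean document; each statement's English description precedes it below -/
import Mathlib

section
/- Let U : ℝ → ℝ be a C² solution of U'' + c U' + f(U) = 0 on ℝ with U(-∞) = 1, U(+∞) = 0, 0 < U < 1, where c > 0 and f is C¹ with f(0) = f(1) = 0. Then U' ∈ L²(ℝ) and c ∫_ℝ (U'(x))² dx = ∫₀¹ f(u) du. In particular, if ∫₀¹ f > 0 then c > 0 forces ∫_ℝ (U')² = (1/c)∫₀¹ f. -/
/-!
The energy `E = U'²/2 + F(U)`, with `F` the primitive of `f` vanishing at `0`, dissipates along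
the wave: `E' = -c U'²`. Since `E → F(1)` at `-∞` and `E → F(0) = 0` at `+∞`, the nonnegative
function `c U'²` is the derivative of a function with finite limits at both ends, hence integrable
with integral `F(1) = ∫₀¹ f`.
-/

open MeasureTheory Filter Set Topology

theorem integrableOn_Iic_deriv_of_nonneg' {g g' : ℝ → ℝ} {a l : ℝ}
    (hderiv : ∀ x ∈ Iic a, HasDerivAt g (g' x) x) (hg' : ∀ x ∈ Iio a, 0 ≤ g' x)
    (hg : Tendsto g atBot (𝓝 l)) : IntegrableOn g' (Iic a) := by
  have hreflected : IntegrableOn (fun x => g' (-x)) (Ioi (-a)) := by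
    refine integrableOn_Ioi_deriv_of_nonneg' (g := fun x => -g (-x)) (l := -l) (fun x hx => ?_)
      (fun x hx => hg' (-x) (mem_Iio.mpr (neg_lt.mp hx))) (hg.comp tendsto_neg_atTop_atBot).neg
    have hx' : -x ∈ Iic a := mem_Iic.mpr (neg_le.mp hx)
    refine (((hderiv (-x) hx').comp x (hasDerivAt_neg x)).neg).congr_deriv ?_
    ring
  rw [integrableOn_Iic_iff_integrableOn_Iio]
  simpa using hreflected.comp_neg_Iio

theorem integrable_deriv_of_nonneg {g g' : ℝ → ℝ} {l m : ℝ}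
    (hderiv : ∀ x, HasDerivAt g (g' x) x) (hg' : ∀ x, 0 ≤ g' x)
    (hbot : Tendsto g atBot (𝓝 l)) (htop : Tendsto g atTop (𝓝 m)) : Integrable g' := by
  rw [← integrableOn_univ, ← Iic_union_Ioi (a := 0)]
  exact (integrableOn_Iic_deriv_of_nonneg' (fun x _ => hderiv x) (fun x _ => hg' x) hbot).union
    (integrableOn_Ioi_deriv_of_nonneg' (fun x _ => hderiv x) (fun x _ => hg' x) htop)

noncomputable def travelingWaveEnergy (f U : ℝ → ℝ) (x : ℝ) : ℝ :=
  deriv U x ^ 2 / 2 + ∫ t in (0 : ℝ)..U x, f t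

theorem hasDerivAt_travelingWaveEnergy {f U : ℝ → ℝ} {c : ℝ} (hf : Continuous f)
    (hU : Differentiable ℝ U) (hU' : Differentiable ℝ (deriv U))
    (hode : ∀ x, deriv (deriv U) x + c * deriv U x + f (U x) = 0) (x : ℝ) :
    HasDerivAt (travelingWaveEnergy f U) (-(c * deriv U x ^ 2)) x := by
  have hkinetic : HasDerivAt (fun y => deriv U y ^ 2 / 2)
      (deriv U x * deriv (deriv U) x) x := by
    refine (((hU' x).hasDerivAt.pow 2).div_const 2).congr_deriv ?_
    ring
  have hpotential : HasDerivAt (fun y => ∫ t in (0 : ℝ)..U y, f t) (f (U x) * deriv U x) x :=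
    (hf.integral_hasStrictDerivAt 0 (U x)).hasDerivAt.comp x (hU x).hasDerivAt
  refine (hkinetic.add hpotential).congr_deriv ?_
  linear_combination deriv U x * hode x

theorem tendsto_travelingWaveEnergy {f U : ℝ → ℝ} {l : Filter ℝ} {a : ℝ} (hf : Continuous f)
    (hU : Tendsto U l (𝓝 a)) (hU' : Tendsto (deriv U) l (𝓝 0)) :
    Tendsto (travelingWaveEnergy f U) l (𝓝 (∫ t in (0 : ℝ)..a, f t)) := by
  have hprimitive := (hf.integral_hasStrictDerivAt 0 a).hasDerivAt.continuousAt
  show Tendsto (fun x => deriv U x ^ 2 / 2 + ∫ t in (0 : ℝ)..U x, f t) l _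
  simpa using ((hU'.pow 2).div_const 2).add (hprimitive.tendsto.comp hU)

theorem stmt1_general (U f : ℝ → ℝ) (c : ℝ) (hc : 0 < c)
    (hU : ContDiff ℝ 2 U) (hf : ContDiff ℝ 1 f)
    (hode : ∀ x : ℝ, deriv (deriv U) x + c * deriv U x + f (U x) = 0)
    (hlim1 : Tendsto U atBot (nhds 1)) (hlim0 : Tendsto U atTop (nhds 0))
    (hd1 : Tendsto (deriv U) atBot (nhds 0))
    (hd0 : Tendsto (deriv U) atTop (nhds 0)) :
    MeasureTheory.Integrable (fun x => (deriv U x) ^ 2) ∧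
      c * (∫ x : ℝ, (deriv U x) ^ 2) = ∫ u in (0:ℝ)..1, f u ∧
      (0 < (∫ u in (0:ℝ)..1, f u) →
        (∫ x : ℝ, (deriv U x) ^ 2) = (1 / c) * ∫ u in (0:ℝ)..1, f u) := by
  have hU' : Differentiable ℝ (deriv U) :=
    (hU.iterate_deriv' 1 1).differentiable one_ne_zero
  have hdissipation (x : ℝ) : HasDerivAt (-travelingWaveEnergy f U) (c * deriv U x ^ 2) x := by
    exact (hasDerivAt_travelingWaveEnergy hf.continuous (hU.differentiable two_ne_zero) hU'
      hode x).neg.congr_deriv (neg_neg _)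
  have hbot := (tendsto_travelingWaveEnergy hf.continuous hlim1 hd1).neg
  have htop := (tendsto_travelingWaveEnergy hf.continuous hlim0 hd0).neg
  have hint : Integrable fun x => c * deriv U x ^ 2 :=
    integrable_deriv_of_nonneg hdissipation (fun x => by positivity) hbot htop
  have hidentity : c * ∫ x, deriv U x ^ 2 = ∫ u in (0 : ℝ)..1, f u := by
    rw [← integral_const_mul, integral_of_hasDerivAt_of_tendsto hdissipation hint hbot htop]
    simp
  refine ⟨by simpa [hc.ne'] using hint.const_mul c⁻¹, hidentity, fun _ => ?_⟩
  rw [← hidentity]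
  field_simp

/-- A bistable travelling-wave profile `U` with speed `c > 0` satisfies
`U' ∈ L²(ℝ)` and the Rankine–Hugoniot type identity `c ∫ (U')² = ∫₀¹ f`;
in particular if `∫₀¹ f > 0` then `∫ (U')² = (1/c) ∫₀¹ f`. -/
theorem stmt1 (U f : ℝ → ℝ) (c : ℝ) (hc : 0 < c)
    (hU : ContDiff ℝ 2 U) (hf : ContDiff ℝ 1 f)
    (hode : ∀ x : ℝ, deriv (deriv U) x + c * deriv U x + f (U x) = 0)
    (hrange : ∀ x : ℝ, U x ∈ Set.Ioo (0:ℝ) 1)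
    (hlim1 : Tendsto U atBot (nhds 1)) (hlim0 : Tendsto U atTop (nhds 0))
    (hf0 : f 0 = 0) (hf1 : f 1 = 0)
    (hd1 : Tendsto (deriv U) atBot (nhds 0))
    (hd0 : Tendsto (deriv U) atTop (nhds 0))
    (hbd : ∃ M : ℝ, ∀ x, |deriv U x| ≤ M) :
    MeasureTheory.Integrable (fun x => (deriv U x) ^ 2) ∧
      c * (∫ x : ℝ, (deriv U x) ^ 2) = ∫ u in (0:ℝ)..1, f u ∧
      (0 < (∫ u in (0:ℝ)..1, f u) →
        (∫ x : ℝ, (deriv U x) ^ 2) = (1 / c) * ∫ u in (0:ℝ)..1, f u) :=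
  stmt1_general U f c hc hU hf hode hlim1 hlim0 hd1 hd0
end

section
/- Let δ > 0, C > 0, γ > 0, ε > 0, and let g : (T,∞) × ℝ → ℝ be a continuous nonnegative function satisfying g(t,ξ) ≤ K/(ε(t+ξ)) whenever t + ξ ≥ 1, for some constant K > 0. Suppose (q,ξ) solves the ODE system q' + δq = g(t,ξ(t)), γξ' = Cq + g(t,ξ(t)) on [T,∞) with q(T) = η > 0, ξ(T) = 0, and ξ(t) ≥ 0 for all t. If additionally ξ(t) ≤ (ln t)² on [T,T*], then there exists a constant K' > 0 (independent of η) such that for all t ∈ [T,T*]: q(t) ≤ K'/(εt) + (K'/(εT) + η) e^{-δ(t-T)/2}. -/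
/-!
Since `ξ ≥ 0`, the source is at most `K / (ε t)` along the solution, so `q` is a subsolution of
`q' + δ q = K / (ε t)`. With `b = 2 / δ` the barrier `Q s = A / (s + b) + η e^{-δ (s - T) / 2}`
is a strict supersolution for `s ≥ 1`: the shift makes `δ - 1 / (s + b) ≥ δ / 2`, and the
exponential term, which starts at `η = q T`, contributes a strictly positive `δ Q / 2`.
The fencing theorem then gives `q ≤ Q`, which is the claimed bound with `K' = ε A`.
-/

open Real Set

theorem image_le_of_strict_supersolution {q Q Q' f : ℝ → ℝ} {δ a b : ℝ}
    (hq : ∀ x ∈ Icc a b, HasDerivAt q (f x - δ * q x) x)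
    (hQ : ∀ x ∈ Icc a b, HasDerivAt Q (Q' x) x)
    (hf : ∀ x ∈ Ico a b, f x < Q' x + δ * Q x) (ha : q a ≤ Q a) :
    ∀ ⦃x⦄, x ∈ Icc a b → q x ≤ Q x :=
  image_le_of_deriv_right_lt_deriv_boundary'
    (fun x hx => (hq x hx).continuousAt.continuousWithinAt)
    (fun x hx => (hq x (Ico_subset_Icc_self hx)).hasDerivWithinAt) ha
    (fun x hx => (hQ x hx).continuousAt.continuousWithinAt)
    (fun x hx => (hQ x (Ico_subset_Icc_self hx)).hasDerivWithinAt)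
    (fun x hx hqx => by rw [hqx]; linarith [hf x hx])

noncomputable def upperBarrier (δ A b η T s : ℝ) : ℝ := A / (s + b) + η * exp (-δ * (s - T) / 2)

section upperBarrier
variable {δ A b η T s : ℝ}

theorem hasDerivAt_upperBarrier (hs : s + b ≠ 0) :
    HasDerivAt (upperBarrier δ A b η T)
      (-A / (s + b) ^ 2 - δ / 2 * (η * exp (-δ * (s - T) / 2))) s := by
  have hinv : HasDerivAt (fun x => A / (x + b)) (-A / (s + b) ^ 2) s := by
    simpa [div_eq_mul_inv, neg_div] using
      ((hasDerivAt_id s).add_const b).inv hs |>.const_mul A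
  have hexp : HasDerivAt (fun x => η * exp (-δ * (x - T) / 2))
      (η * (exp (-δ * (s - T) / 2) * (-δ / 2))) s := by
    simpa using ((((hasDerivAt_id s).sub_const T).const_mul (-δ)).div_const 2).exp.const_mul η
  exact (hinv.add hexp).congr_deriv (by ring)

theorem div_lt_deriv_add_mul_upperBarrier (hA : 0 ≤ A) (hη : 0 < η) (hδ : 0 < δ)
    (hs : 2 ≤ δ * (s + b)) :
    δ * A / (2 * (s + b)) <
      (-A / (s + b) ^ 2 - δ / 2 * (η * exp (-δ * (s - T) / 2))) + δ * upperBarrier δ A b η T s := by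
  have hsb : 0 < s + b := by nlinarith
  have hdecay : 0 < δ / 2 * (η * exp (-δ * (s - T) / 2)) := by positivity
  have hpos : 0 ≤ A / (s + b) ^ 2 * (δ * (s + b) / 2 - 1) :=
    mul_nonneg (by positivity) (by linarith)
  have key : -A / (s + b) ^ 2 + δ * (A / (s + b)) - δ * A / (2 * (s + b))
      = A / (s + b) ^ 2 * (δ * (s + b) / 2 - 1) := by
    field_simp
    ring
  unfold upperBarrier
  nlinarith

theorem upperBarrier_le {c : ℝ} (hA : 0 ≤ A) (hb : 0 ≤ b) (hs : 0 < s) (hc : 0 ≤ c) :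
    upperBarrier δ A b η T s ≤ A / s + (c + η) * exp (-δ * (s - T) / 2) := by
  unfold upperBarrier
  gcongr
  · linarith
  · exact le_add_of_nonneg_left hc

end upperBarrier

theorem div_le_mul_one_add_div_add {c b x : ℝ} (hc : 0 ≤ c) (hb : 0 ≤ b) (hx : 1 ≤ x) :
    c / x ≤ c * (1 + b) / (x + b) := by
  rw [div_le_div_iff₀ (by linarith) (by linarith)]
  nlinarith [mul_nonneg hc (mul_nonneg hb (sub_nonneg.mpr hx))]

theorem stmt3_general (δ C γ ε K T Tstar : ℝ)
    (hδ : 0 < δ) (hε : 0 < ε) (hK : 0 < K)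
    (hT : 1 ≤ T)
    (g : ℝ → ℝ → ℝ)
    (hg_bound : ∀ t y, 1 ≤ t + y → g t y ≤ K / (ε * (t + y))) :
    ∃ K' > 0, ∀ η > 0, ∀ q ξ : ℝ → ℝ,
      (∀ t ∈ Ici T, HasDerivAt q (g t (ξ t) - δ * q t) t) →
      (∀ t ∈ Ici T, HasDerivAt ξ ((C * q t + g t (ξ t)) / γ) t) →
      q T = η → ξ T = 0 →
      (∀ t ∈ Ici T, 0 ≤ ξ t) →
      (∀ t ∈ Icc T Tstar, ξ t ≤ (Real.log t) ^ 2) →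
      ∀ t ∈ Icc T Tstar,
        q t ≤ K' / (ε * t) + (K' / (ε * T) + η) * Real.exp (-δ * (t - T) / 2) := by
  set b := 2 / δ
  have hb : 0 < b := by positivity
  refine ⟨2 * K * (1 + b) / δ, by positivity, ?_⟩
  intro η hη q ξ hq _ hqT _ hξ _ t ⟨hTt, _⟩
  set K' := 2 * K * (1 + b) / δ
  have hsource : ∀ x, T ≤ x → g x (ξ x) ≤ δ * (K' / ε) / (2 * (x + b)) := by
    intro x hx
    have hξx := hξ x hx
    calc g x (ξ x) ≤ K / (ε * (x + ξ x)) := hg_bound x (ξ x) (by linarith)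
      _ ≤ K / ε / x := by
        rw [div_div]
        exact div_le_div_of_nonneg_left hK.le (by nlinarith) (by nlinarith)
      _ ≤ K / ε * (1 + b) / (x + b) := div_le_mul_one_add_div_add (by positivity) hb.le (by linarith)
      _ = δ * (K' / ε) / (2 * (x + b)) := by
        simp only [K']
        field_simp
  have hq_le : q t ≤ upperBarrier δ (K' / ε) b η T t :=
    image_le_of_strict_supersolution (fun x hx => hq x hx.1)
      (fun x hx => hasDerivAt_upperBarrier (by linarith [hx.1]))
      (fun x hx => (hsource x hx.1).trans_lt (div_lt_deriv_add_mul_upperBarrier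
        (by positivity) hη hδ (by nlinarith [mul_div_cancel₀ 2 hδ.ne', hx.1])))
      (by simp [upperBarrier, hqT]; positivity) (right_mem_Icc.2 hTt)
  calc q t ≤ upperBarrier δ (K' / ε) b η T t := hq_le
    _ ≤ K' / ε / t + (K' / (ε * T) + η) * exp (-δ * (t - T) / 2) :=
      upperBarrier_le (by positivity) hb.le (by linarith) (by positivity)
    _ = K' / (ε * t) + (K' / (ε * T) + η) * exp (-δ * (t - T) / 2) := by rw [div_div]

/-- A priori bound in Lemma 4.1: for the coupled system
`q' + δq = g(t,ξ(t))`, `γξ' = Cq + g(t,ξ(t))` with decaying source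
`g(t,ξ) ≤ K/(ε(t+ξ))`, as long as `ξ(t) ≤ (ln t)²` one has
`q(t) ≤ K'/(εt) + (K'/(εT) + η) e^{-δ(t-T)/2}`, with `K'` independent of `η`. -/
theorem stmt3 (δ C γ ε K T Tstar : ℝ)
    (hδ : 0 < δ) (hC : 0 < C) (hγ : 0 < γ) (hε : 0 < ε) (hK : 0 < K)
    (hT : 1 ≤ T) (hTT : T ≤ Tstar)
    (g : ℝ → ℝ → ℝ)
    (hg_cont : Continuous fun p : ℝ × ℝ => g p.1 p.2)
    (hg_nonneg : ∀ t y, T ≤ t → 0 ≤ g t y)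
    (hg_bound : ∀ t y, 1 ≤ t + y → g t y ≤ K / (ε * (t + y))) :
    ∃ K' > 0, ∀ η > 0, ∀ q ξ : ℝ → ℝ,
      (∀ t ∈ Ici T, HasDerivAt q (g t (ξ t) - δ * q t) t) →
      (∀ t ∈ Ici T, HasDerivAt ξ ((C * q t + g t (ξ t)) / γ) t) →
      q T = η → ξ T = 0 →
      (∀ t ∈ Ici T, 0 ≤ ξ t) →
      (∀ t ∈ Icc T Tstar, ξ t ≤ (Real.log t) ^ 2) →
      ∀ t ∈ Icc T Tstar,
        q t ≤ K' / (ε * t) + (K' / (ε * T) + η) * Real.exp (-δ * (t - T) / 2) :=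
  stmt3_general δ C γ ε K T Tstar hδ hε hK hT g hg_bound
end

section
/- Let q, ξ : [T,∞) → ℝ solve q' + δq = h(t), γ ξ' = C q + h(t) with q(T) = η ≥ 0, ξ(T) = 0, where δ, γ, C > 0 and h ≥ 0 is continuous with h(t) ≤ A/t^{3/2} for t ≥ T ≥ 1. Then ξ is nondecreasing and bounded: there is a constant K depending on δ, γ, C, A (but not on η except linearly) with ξ(t) ≤ K(η + T^{-1/2}) for all t ≥ T. -/
/-!
The combination `W = γ ξ + (C / δ) q` cancels the `q`-terms of the two equations:
`W' = (1 + C / δ) h ≤ (1 + C / δ) A t^{-3/2}`.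
Since `(2 t^{-1/2})' = -t^{-3/2}`, the Lyapunov function `W + 2A (1 + C / δ) t^{-1/2}` is
nonincreasing. An integrating factor shows `q ≥ 0`, so `ξ' ≥ 0` and
`γ ξ(t) ≤ W(t) ≤ (C / δ) η + 2A (1 + C / δ) T^{-1/2}`.
-/

open Real Set

theorem monotoneOn_Ici_of_hasDerivAt_nonneg {f f' : ℝ → ℝ} {T : ℝ}
    (hf : ∀ t ∈ Ici T, HasDerivAt f (f' t) t) (hf' : ∀ t ∈ Ici T, 0 ≤ f' t) :
    MonotoneOn f (Ici T) := by
  refine monotoneOn_of_hasDerivWithinAt_nonneg (convex_Ici T)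
    (fun t ht => (hf t ht).continuousAt.continuousWithinAt) (fun t ht => ?_)
    (fun t ht => hf' t (interior_subset ht))
  exact (hf t (interior_subset ht)).hasDerivWithinAt

theorem antitoneOn_Ici_of_hasDerivAt_nonpos {f f' : ℝ → ℝ} {T : ℝ}
    (hf : ∀ t ∈ Ici T, HasDerivAt f (f' t) t) (hf' : ∀ t ∈ Ici T, f' t ≤ 0) :
    AntitoneOn f (Ici T) := by
  have hneg : MonotoneOn (fun t => -f t) (Ici T) :=
    monotoneOn_Ici_of_hasDerivAt_nonneg (fun t ht => (hf t ht).neg)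
      (fun t ht => neg_nonneg.mpr (hf' t ht))
  exact fun s hs t ht hst => neg_le_neg_iff.mp (hneg hs ht hst)

theorem nonneg_of_hasDerivAt_sub_mul_self {h q : ℝ → ℝ} {δ T : ℝ}
    (hq : ∀ t ∈ Ici T, HasDerivAt q (h t - δ * q t) t) (hh : ∀ t ∈ Ici T, 0 ≤ h t)
    (hqT : 0 ≤ q T) : ∀ t ∈ Ici T, 0 ≤ q t := by
  have hderiv : ∀ t ∈ Ici T,
      HasDerivAt (fun s => exp (δ * s) * q s) (exp (δ * t) * h t) t := fun t ht =>
    (((hasDerivAt_id' t).const_mul δ).exp.mul (hq t ht)).congr_deriv (by ring)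
  have hmono := monotoneOn_Ici_of_hasDerivAt_nonneg hderiv
    (fun t ht => mul_nonneg (exp_pos _).le (hh t ht))
  intro t ht
  have hle : exp (δ * T) * q T ≤ exp (δ * t) * q t := hmono self_mem_Ici ht ht
  exact nonneg_of_mul_nonneg_right
    ((mul_nonneg (exp_pos _).le hqT).trans hle) (exp_pos _)

theorem hasDerivAt_two_mul_rpow_neg_half {t : ℝ} (ht : 0 < t) :
    HasDerivAt (fun s : ℝ => 2 * s ^ (-(1:ℝ)/2)) (-(1 / t ^ ((3:ℝ)/2))) t := by
  refine ((hasDerivAt_rpow_const (p := -(1:ℝ)/2) (Or.inl ht.ne')).const_mul 2).congr_deriv ?_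
  rw [show -(1:ℝ)/2 - 1 = -((3:ℝ)/2) by norm_num, rpow_neg ht.le]
  ring

theorem antitoneOn_lyapunov {h q ξ : ℝ → ℝ} {δ γ C A T : ℝ} (hδ : 0 < δ) (hγ : γ ≠ 0)
    (hC : 0 ≤ C) (hT : 0 < T) (hh : ∀ t ∈ Ici T, h t ≤ A / t ^ ((3:ℝ)/2))
    (hq : ∀ t ∈ Ici T, HasDerivAt q (h t - δ * q t) t)
    (hξ : ∀ t ∈ Ici T, HasDerivAt ξ ((C * q t + h t) / γ) t) :
    AntitoneOn (fun t => γ * ξ t + C / δ * q t + A * (1 + C / δ) * (2 * t ^ (-(1:ℝ)/2)))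
      (Ici T) := by
  refine antitoneOn_Ici_of_hasDerivAt_nonpos (fun t ht =>
    (((hξ t ht).const_mul γ).add ((hq t ht).const_mul (C / δ))).add
      ((hasDerivAt_two_mul_rpow_neg_half (hT.trans_le ht)).const_mul (A * (1 + C / δ))))
    (fun t ht => ?_)
  have hW : γ * ((C * q t + h t) / γ) + C / δ * (h t - δ * q t)
      = (1 + C / δ) * h t := by
    field_simp
    ring
  calc γ * ((C * q t + h t) / γ) + C / δ * (h t - δ * q t)
        + A * (1 + C / δ) * -(1 / t ^ ((3:ℝ)/2))
      = (1 + C / δ) * (h t - A / t ^ ((3:ℝ)/2)) := by rw [hW]; ring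
    _ ≤ 0 := mul_nonpos_of_nonneg_of_nonpos (by positivity) (sub_nonpos.mpr (hh t ht))

/-- final conclusion of Lemma 4.1: with forcing `h(t) ≤ A t^{-3/2}`,
the system `q' + δq = h`, `γ ξ' = C q + h`, `q(T) = η ≥ 0`, `ξ(T) = 0` has `ξ`
nondecreasing and bounded by `K(η + T^{-1/2})`, with `K` independent of `T, η, h`. -/
theorem stmt14 (δ γ C A : ℝ) (hδ : 0 < δ) (hγ : 0 < γ) (hC : 0 < C) (hA : 0 < A) :
    ∃ K > 0, ∀ (T η : ℝ), 1 ≤ T → 0 ≤ η → ∀ h q ξ : ℝ → ℝ,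
      ContinuousOn h (Ici T) →
      (∀ t ∈ Ici T, 0 ≤ h t ∧ h t ≤ A / t ^ ((3:ℝ)/2)) →
      (∀ t ∈ Ici T, HasDerivAt q (h t - δ * q t) t) →
      (∀ t ∈ Ici T, HasDerivAt ξ ((C * q t + h t) / γ) t) →
      q T = η → ξ T = 0 →
      MonotoneOn ξ (Ici T) ∧
        ∀ t ∈ Ici T, ξ t ≤ K * (η + T ^ (-(1:ℝ)/2)) := by
  refine ⟨(C / δ + 2 * A * (1 + C / δ)) / γ, by positivity, ?_⟩
  intro T η hT hη h q ξ _ hh hq hξ hqT hξT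
  have hT0 : 0 < T := one_pos.trans_le hT
  have hq_nonneg := nonneg_of_hasDerivAt_sub_mul_self hq (fun t ht => (hh t ht).1) (hqT ▸ hη)
  refine ⟨monotoneOn_Ici_of_hasDerivAt_nonneg hξ fun t ht => ?_, fun t ht => ?_⟩
  · have := (hh t ht).1
    have := hq_nonneg t ht
    positivity
  have hW := antitoneOn_lyapunov hδ hγ.ne' hC.le hT0 (fun t ht => (hh t ht).2) hq hξ
    self_mem_Ici ht ht
  simp only [hqT, hξT, mul_zero, zero_add] at hW
  have ha : 0 ≤ C / δ := by positivity
  have hb : 0 ≤ A * (1 + C / δ) := by positivity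
  rw [div_mul_eq_mul_div, le_div_iff₀ hγ]
  nlinarith [mul_nonneg ha (hq_nonneg t ht), mul_nonneg ha (rpow_nonneg hT0.le (-(1:ℝ)/2)),
    mul_nonneg hb (rpow_nonneg (hT0.le.trans ht) (-(1:ℝ)/2)), mul_nonneg hb hη]
end

section
/- Fix δ > 0. Define, for η > 0 and T ≥ 1, the solution (q,ξ) of the linear system q' + (δ/4) q = φ(t) ξ(t), ξ' = β q, with q(T) = ξ(T) = 1, where β > 0 and φ is continuous with 0 ≤ φ(t) ≤ ε/(1+t). Then q(t) ≤ e^{-δ(t-T)/4} + C ε ξ(t)/(1+t) for all t ≥ T, where C depends only on δ (using that ξ is nondecreasing and ∫_T^t e^{-δ(t-s)/4}/(1+s) ds ≤ C/(1+t)). -/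
open Real Set

/-!
Write `a = δ/4`. The barrier `ψ(t) = 1/(c+t)` with `c = 1 + 2/a` satisfies
`1/(1+t) ≤ C (ψ' + aψ)` for `C = 2c/a`, because `a(c+t) ≥ 2` and `c ≥ 1`. While `q ≥ 0`, `ξ` is
nondecreasing from `ξ(T) = 1`, so `u = q - εCξψ` satisfies `u' ≤ -a u` (the source `φξ` is
absorbed by `εCξ(ψ' + aψ)` and `-εCβqψ ≤ 0`), and Grönwall gives `u(t) ≤ e^{-a(t-T)}`; since
`ψ(t) ≤ 1/(1+t)` this is the claim. That `q > 0` follows from the same comparison for `-q`: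
up to the first zero of `q` one has `ξ ≥ 0`, hence `(-q)' ≤ -a(-q)` and `q ≥ e^{-a(t-T)} > 0`.
-/

theorem le_mul_exp_of_deriv_right_le {f f' : ℝ → ℝ} {K a b : ℝ}
    (hf : ContinuousOn f (Icc a b)) (hf' : ∀ x ∈ Ico a b, HasDerivWithinAt f (f' x) (Ici x) x)
    (bound : ∀ x ∈ Ico a b, f' x ≤ K * f x) :
    ∀ x ∈ Icc a b, f x ≤ f a * exp (K * (x - a)) := by
  intro x hx
  have := le_gronwallBound_of_liminf_deriv_right_le hf
    (fun x hx _ hr => (hf' x hx).liminf_right_slope_le hr) le_rfl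
    (fun x hx => (add_zero (K * f x)).symm ▸ bound x hx) x hx
  rwa [gronwallBound_ε0] at this

theorem pos_of_forall_Ico_pos {f : ℝ → ℝ} {T : ℝ} (hf : ContinuousOn f (Ici T))
    (step : ∀ s ∈ Ici T, (∀ r ∈ Ico T s, 0 < f r) → 0 < f s) :
    ∀ t ∈ Ici T, 0 < f t := by
  intro t ht
  by_contra! hft
  have hclosed : IsClosed (Icc T t ∩ f ⁻¹' Iic 0) :=
    (hf.mono Icc_subset_Ici_self).preimage_isClosed_of_isClosed isClosed_Icc isClosed_Iic
  obtain ⟨s, ⟨⟨hTs, hst⟩, hfs⟩, hleast⟩ :=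
    (isCompact_Icc.of_isClosed_subset hclosed inter_subset_left).exists_isLeast
      ⟨t, ⟨ht, le_rfl⟩, hft⟩
  refine (step s hTs fun r hr => ?_).not_ge hfs
  by_contra! hfr
  exact hr.2.not_ge (hleast ⟨⟨hr.1, hr.2.le.trans hst⟩, hfr⟩)

theorem one_div_one_add_le {a c t : ℝ} (ha : 0 < a) (hc : 1 ≤ c) (hac : 2 ≤ a * c)
    (ht : 0 ≤ t) : 1 / (1 + t) ≤ 2 * c / a * (a / (c + t) - 1 / (c + t) ^ 2) := by
  have hct : 0 < c + t := by linarith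
  calc 1 / (1 + t) ≤ c / (c + t) := by
        rw [div_le_div_iff₀ (by linarith) hct]; nlinarith
    _ = 2 * c / a * (a / (2 * (c + t))) := by field_simp
    _ ≤ 2 * c / a * (a / (c + t) - 1 / (c + t) ^ 2) := by
        gcongr
        have hact : 0 ≤ a * (c + t) - 2 := by nlinarith
        rw [div_sub_div _ _ hct.ne' (by positivity),
          div_le_div_iff₀ (by positivity) (by positivity)]
        nlinarith [mul_nonneg (mul_nonneg hct.le hct.le) hact]

namespace LinearSystem

variable {a β ε T : ℝ} {φ q ξ : ℝ → ℝ}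

theorem one_le_xi_of_nonneg (hβ : 0 ≤ β) (hξ : ∀ t ∈ Ici T, HasDerivAt ξ (β * q t) t)
    (hξT : ξ T = 1) {s : ℝ} (hq : ∀ r ∈ Ico T s, 0 ≤ q r) : ∀ t ∈ Icc T s, 1 ≤ ξ t := by
  intro t ht
  have h := le_mul_exp_of_deriv_right_le (f := fun r => -ξ r) (K := 0)
    (fun r hr => (hξ r hr.1).neg.continuousAt.continuousWithinAt)
    (fun r hr => (hξ r hr.1).neg.hasDerivWithinAt)
    (fun r hr => by simpa using mul_nonneg hβ (hq r hr)) t ht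
  simp only [hξT, zero_mul, exp_zero, mul_one] at h
  linarith

theorem q_pos (hβ : 0 ≤ β) (hφ : ∀ t ∈ Ici T, 0 ≤ φ t)
    (hq : ∀ t ∈ Ici T, HasDerivAt q (φ t * ξ t - a * q t) t)
    (hξ : ∀ t ∈ Ici T, HasDerivAt ξ (β * q t) t) (hqT : q T = 1) (hξT : ξ T = 1) :
    ∀ t ∈ Ici T, 0 < q t := by
  refine pos_of_forall_Ico_pos (fun t ht => (hq t ht).continuousAt.continuousWithinAt) ?_
  intro s hs hqs
  have hξs := one_le_xi_of_nonneg hβ hξ hξT fun r hr => (hqs r hr).le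
  have h := le_mul_exp_of_deriv_right_le (f := fun r => -q r) (K := -a)
    (fun r hr => (hq r hr.1).neg.continuousAt.continuousWithinAt)
    (fun r hr => (hq r hr.1).neg.hasDerivWithinAt)
    (fun r hr => by
      have := mul_nonneg (hφ r hr.1) (zero_le_one.trans (hξs r (Ico_subset_Icc_self hr)))
      linarith) s ⟨hs, le_rfl⟩
  simp only [hqT] at h
  linarith [exp_pos (-a * (s - T))]

theorem one_le_xi (hβ : 0 ≤ β) (hφ : ∀ t ∈ Ici T, 0 ≤ φ t)
    (hq : ∀ t ∈ Ici T, HasDerivAt q (φ t * ξ t - a * q t) t)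
    (hξ : ∀ t ∈ Ici T, HasDerivAt ξ (β * q t) t) (hqT : q T = 1) (hξT : ξ T = 1) :
    ∀ t ∈ Ici T, 1 ≤ ξ t := fun t ht =>
  one_le_xi_of_nonneg hβ hξ hξT (fun r hr => (q_pos hβ hφ hq hξ hqT hξT r hr.1).le) t ⟨ht, le_rfl⟩

theorem q_sub_le_exp {c K : ℝ} (hβ : 0 ≤ β) (hK : 0 ≤ K) (hcT : 0 < c + T)
    (hφ : ∀ t ∈ Ici T, 0 ≤ φ t ∧ φ t ≤ K * (a / (c + t) - 1 / (c + t) ^ 2))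
    (hq : ∀ t ∈ Ici T, HasDerivAt q (φ t * ξ t - a * q t) t)
    (hξ : ∀ t ∈ Ici T, HasDerivAt ξ (β * q t) t) (hqT : q T = 1) (hξT : ξ T = 1) :
    ∀ t ∈ Ici T, q t - K * (ξ t * (c + t)⁻¹) ≤ exp (-a * (t - T)) := by
  intro t ht
  have hcr : ∀ r ∈ Ici T, 0 < c + r := fun r hr => by linarith [mem_Ici.1 hr]
  have hqpos := q_pos hβ (fun r hr => (hφ r hr).1) hq hξ hqT hξT
  have hξ1 := one_le_xi hβ (fun r hr => (hφ r hr).1) hq hξ hqT hξT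
  set u := fun r => q r - K * (ξ r * (c + r)⁻¹)
  set u' := fun r =>
    (φ r * ξ r - a * q r) - K * (β * q r * (c + r)⁻¹ + ξ r * (-1 / (c + r) ^ 2))
  have hu : ∀ r ∈ Ici T, HasDerivAt u (u' r) r := fun r hr => by
    have hψ := ((hasDerivAt_id' r).const_add c).fun_inv (hcr r hr).ne'
    exact ((hq r hr).fun_sub (((hξ r hr).fun_mul hψ).const_mul K)).congr_deriv (by ring)
  have hdecay : ∀ r ∈ Ico T t, u' r ≤ -a * u r := fun r hr => by
    have hξr : 0 ≤ ξ r := zero_le_one.trans (hξ1 r hr.1)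
    have hβqψ : 0 ≤ K * β * q r * (c + r)⁻¹ := by
      have := hqpos r hr.1; have := hcr r hr.1; positivity
    simp only [u, u']
    linear_combination ξ r * (hφ r hr.1).2 + hβqψ
  have huT : u T ≤ 1 := by
    have : 0 ≤ K * (1 * (c + T)⁻¹) := by positivity
    simp only [u, hqT, hξT]
    linarith
  calc u t ≤ u T * exp (-a * (t - T)) :=
        le_mul_exp_of_deriv_right_le (fun r hr => (hu r hr.1).continuousAt.continuousWithinAt)
          (fun r hr => (hu r hr.1).hasDerivWithinAt) hdecay t ⟨ht, le_rfl⟩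
    _ ≤ exp (-a * (t - T)) := mul_le_of_le_one_left (exp_pos _).le huT

theorem q_le_exp_add (ha : 0 < a) (hβ : 0 ≤ β) (hε : 0 ≤ ε) (hT : 0 ≤ T)
    (hφ : ∀ t ∈ Ici T, 0 ≤ φ t ∧ φ t ≤ ε / (1 + t))
    (hq : ∀ t ∈ Ici T, HasDerivAt q (φ t * ξ t - a * q t) t)
    (hξ : ∀ t ∈ Ici T, HasDerivAt ξ (β * q t) t) (hqT : q T = 1) (hξT : ξ T = 1) :
    ∀ t ∈ Ici T, q t ≤ exp (-a * (t - T)) + 2 * (1 + 2 / a) / a * ε * ξ t / (1 + t) := by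
  intro t ht
  set c := 1 + 2 / a with hc
  set C := 2 * c / a
  have hc1 : 1 ≤ c := by linarith [show 0 < 2 / a by positivity]
  have hac : 2 ≤ a * c := by rw [hc, mul_add, mul_div_cancel₀ _ ha.ne']; linarith
  have hφC : ∀ r ∈ Ici T, 0 ≤ φ r ∧ φ r ≤ ε * C * (a / (c + r) - 1 / (c + r) ^ 2) :=
    fun r hr => ⟨(hφ r hr).1, (hφ r hr).2.trans <| by
      rw [div_eq_mul_one_div, mul_assoc]
      exact mul_le_mul_of_nonneg_left (one_div_one_add_le ha hc1 hac (hT.trans hr)) hε⟩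
  have hu := q_sub_le_exp hβ (by positivity) (by linarith) hφC hq hξ hqT hξT t ht
  have hξt : 0 ≤ ξ t :=
    zero_le_one.trans (one_le_xi hβ (fun r hr => (hφ r hr).1) hq hξ hqT hξT t ht)
  have h1t : 0 < 1 + t := by linarith [mem_Ici.1 ht]
  calc q t ≤ exp (-a * (t - T)) + ε * C * ξ t * (c + t)⁻¹ := by linarith
    _ ≤ exp (-a * (t - T)) + ε * C * ξ t * (1 + t)⁻¹ := by gcongr
    _ = exp (-a * (t - T)) + C * ε * ξ t / (1 + t) := by ring

end LinearSystem

/-- the core estimate of system (3.10): for the linear system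
`q' + (δ/4) q = φ(t) ξ(t)`, `ξ' = β q`, with `q(T) = ξ(T) = 1` and
`0 ≤ φ(t) ≤ ε/(1+t)`, one has `q(t) ≤ e^{-δ(t-T)/4} + Cε ξ(t)/(1+t)`,
with `C` depending only on `δ`. -/
theorem stmt17 (δ : ℝ) (hδ : 0 < δ) :
    ∃ C > 0, ∀ (β ε T : ℝ), 0 < β → 0 < ε → 1 ≤ T →
      ∀ φ q ξ : ℝ → ℝ,
      ContinuousOn φ (Ici T) →
      (∀ t ∈ Ici T, 0 ≤ φ t ∧ φ t ≤ ε / (1 + t)) →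
      (∀ t ∈ Ici T, HasDerivAt q (φ t * ξ t - (δ / 4) * q t) t) →
      (∀ t ∈ Ici T, HasDerivAt ξ (β * q t) t) →
      q T = 1 → ξ T = 1 →
      ∀ t ∈ Ici T,
        q t ≤ Real.exp (-δ * (t - T) / 4) + C * ε * ξ t / (1 + t) := by
  have ha : 0 < δ / 4 := by positivity
  refine ⟨2 * (1 + 2 / (δ / 4)) / (δ / 4), by positivity, ?_⟩
  intro β ε T hβ hε hT φ q ξ _ hφ hq hξ hqT hξT t ht
  rw [show -δ * (t - T) / 4 = -(δ / 4) * (t - T) by ring]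
  exact LinearSystem.q_le_exp_add ha hβ.le hε.le (by linarith) hφ hq hξ hqT hξT t ht
end
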